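/- Let μ, μ* be positive Borel measures on ℝ with μ ≤ μ* (i.e., μ(E) ≤ μ*(E) for every Borel set E). Let K, K* : ℝ × ℝ → ℝ be symmetric kernels whose sections K(ξ,·), K*(ξ,·) are square-integrable with respect to both μ and μ*, satisfying for all ξ, β ∈ ℝ: (i) ∫ K(ξ,ζ)K(β,ζ) dμ(ζ) = K(ξ,β); (ii) ∫ K*(ξ,ζ)K*(β,ζ) dμ*(ζ) = K*(ξ,β); (iii) ∫ K*(ξ,ζ)K(β,ζ) dμ(ζ) = K*(ξ,β). Then for all ξ, β ∈ ℝ, |K(ξ,β) − K*(ξ,β)| ≤ K(β,β)^{1/2} · ( K(ξ,ξ) − K*(ξ,ξ) )^{1/2}. -/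

import Mathlib

/-!
In `L²(μ)` put `u = K(ξ,·)`, `v = K*(ξ,·)` and `w = K(β,·)`. By (i) and (iii),
`⟪u - v, w⟫ = K(ξ,β) - K*(ξ,β)`, and by Cauchy–Schwarz this is at most `‖w‖ ‖u - v‖` with
`‖w‖² = K(β,β)`. Expanding, `‖u - v‖² = K(ξ,ξ) - 2 K*(ξ,ξ) + ‖v‖²`, and `μ ≤ μ*` together with (ii)
gives `‖v‖² ≤ ∫ K*(ξ,·)² dμ* = K*(ξ,ξ)`.
-/

open MeasureTheory

open scoped RealInnerProductSpace

theorem abs_inner_sub_le_of_norm_sq_le {E : Type*} [NormedAddCommGroup E] [InnerProductSpace ℝ E]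
    {u v : E} {c : ℝ} (hvu : ⟪v, u⟫ = c) (hv : ‖v‖ ^ 2 ≤ c) (w : E) :
    |⟪u - v, w⟫| ≤ ‖w‖ * √(‖u‖ ^ 2 - c) := by
  have hsub : ‖u - v‖ ^ 2 ≤ ‖u‖ ^ 2 - c := by
    rw [norm_sub_sq_real, real_inner_comm, hvu]
    linarith
  calc |⟪u - v, w⟫| ≤ ‖u - v‖ * ‖w‖ := abs_real_inner_le_norm _ _
    _ = ‖w‖ * √(‖u - v‖ ^ 2) := by rw [Real.sqrt_sq (norm_nonneg _), mul_comm]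
    _ ≤ ‖w‖ * √(‖u‖ ^ 2 - c) := by gcongr

namespace MeasureTheory

variable {α : Type*} [MeasurableSpace α] {μ : Measure α} {f g : α → ℝ}

theorem MemLp.inner_toLp_eq_integral_mul (hf : MemLp f 2 μ) (hg : MemLp g 2 μ) :
    ⟪hf.toLp f, hg.toLp g⟫ = ∫ x, f x * g x ∂μ := by
  rw [L2.inner_def]
  refine integral_congr_ae ?_
  filter_upwards [hf.coeFn_toLp, hg.coeFn_toLp] with x hfx hgx
  simp [hfx, hgx, mul_comm]

theorem MemLp.norm_toLp_sq_eq_integral_mul_self (hf : MemLp f 2 μ) :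
    ‖hf.toLp f‖ ^ 2 = ∫ x, f x * f x ∂μ := by
  rw [← real_inner_self_eq_norm_sq, hf.inner_toLp_eq_integral_mul hf]

theorem integral_mul_self_mono_measure {ν : Measure α} (hμν : μ ≤ ν) (hf : MemLp f 2 ν) :
    ∫ x, f x * f x ∂μ ≤ ∫ x, f x * f x ∂ν :=
  integral_mono_measure hμν (.of_forall fun x => mul_self_nonneg (f x)) (hf.integrable_mul hf)

end MeasureTheory

theorem lubinsky_inequality_general
    (μ μs : Measure ℝ) (hle : μ ≤ μs)
    (K K' : ℝ → ℝ → ℝ)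
    (hKL2 : ∀ ξ : ℝ, MemLp (K ξ) 2 μ ∧ MemLp (K ξ) 2 μs)
    (hK'L2 : ∀ ξ : ℝ, MemLp (K' ξ) 2 μ ∧ MemLp (K' ξ) 2 μs)
    (hrepK : ∀ ξ β : ℝ, ∫ ζ, K ξ ζ * K β ζ ∂μ = K ξ β)
    (hrepK' : ∀ ξ β : ℝ, ∫ ζ, K' ξ ζ * K' β ζ ∂μs = K' ξ β)
    (hmixed : ∀ ξ β : ℝ, ∫ ζ, K' ξ ζ * K β ζ ∂μ = K' ξ β) :
    ∀ ξ β : ℝ,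
      |K ξ β - K' ξ β| ≤
        Real.sqrt (K β β) * Real.sqrt (K ξ ξ - K' ξ ξ) := by
  intro ξ β
  have hu := (hKL2 ξ).1
  have hv := (hK'L2 ξ).1
  have hw := (hKL2 β).1
  have hvu : ⟪hv.toLp _, hu.toLp _⟫ = K' ξ ξ := by
    rw [hv.inner_toLp_eq_integral_mul hu, hmixed]
  have hv_sq : ‖hv.toLp _‖ ^ 2 ≤ K' ξ ξ := by
    rw [hv.norm_toLp_sq_eq_integral_mul_self, ← hrepK']
    exact integral_mul_self_mono_measure hle (hK'L2 ξ).2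
  have key := abs_inner_sub_le_of_norm_sq_le hvu hv_sq (hw.toLp _)
  rwa [inner_sub_left, hu.inner_toLp_eq_integral_mul hw, hv.inner_toLp_eq_integral_mul hw,
    hrepK, hmixed, hu.norm_toLp_sq_eq_integral_mul_self, hrepK,
    ← Real.sqrt_sq (norm_nonneg (hw.toLp _)), hw.norm_toLp_sq_eq_integral_mul_self, hrepK] at key

/-- **Lubinsky's inequality for reproducing kernels.** For reproducing kernels
`K`, `K'` of measures `μ ≤ μ*`,
`|K(ξ,β) − K'(ξ,β)| ≤ K(β,β)^{1/2} (K(ξ,ξ) − K'(ξ,ξ))^{1/2}`. -/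
theorem lubinsky_inequality
    (μ μs : Measure ℝ) (hle : μ ≤ μs)
    (K K' : ℝ → ℝ → ℝ)
    (hKsymm : ∀ ξ β : ℝ, K ξ β = K β ξ)
    (hK'symm : ∀ ξ β : ℝ, K' ξ β = K' β ξ)
    (hKL2 : ∀ ξ : ℝ, MemLp (K ξ) 2 μ ∧ MemLp (K ξ) 2 μs)
    (hK'L2 : ∀ ξ : ℝ, MemLp (K' ξ) 2 μ ∧ MemLp (K' ξ) 2 μs)
    (hrepK : ∀ ξ β : ℝ, ∫ ζ, K ξ ζ * K β ζ ∂μ = K ξ β)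
    (hrepK' : ∀ ξ β : ℝ, ∫ ζ, K' ξ ζ * K' β ζ ∂μs = K' ξ β)
    (hmixed : ∀ ξ β : ℝ, ∫ ζ, K' ξ ζ * K β ζ ∂μ = K' ξ β) :
    ∀ ξ β : ℝ,
      |K ξ β - K' ξ β| ≤
        Real.sqrt (K β β) * Real.sqrt (K ξ ξ - K' ξ ξ) :=
  lubinsky_inequality_general μ μs hle K K' hKL2 hK'L2 hrepK hrepK' hmixed
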